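/- arXiv:2003.13139 — 2 statements merged into one kernel-verified Lean document; each statement's English description precedes it below -/
import Mathlib

section
/- The integral ∫_{1.1}^{1.9} r(x)·g(x) dx equals (ln(2.9/1.9)/ln(2.9/1.1) + 1/2)² − 0.1/ln(2.9/1.1) − 3/4. -/
/-!
In the coordinate `t = τ x = log (2.9 / x) / log (2.9 / 1.1)` the density becomes `g x dx = -dt`,
and `a₁`, `a₂` are the points where `τ = 0.95`, `0.45`. There `r x = (x - 1) / 2 - ψ (τ x)`, where
`ψ t = log (2.9 / (1 + 2 t)) / log (2.9 / 1.1)` with `t` clamped to `[0.45, 0.95]`. So the integral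
is the elementary `∫ (x - 1) / (2 x log (2.9 / 1.1)) dx` minus `∫ ψ` over `[τ 1.9, 1]`; since
`τ 1.9 ≤ 0.45`, the latter splits into a constant part, an integral of `log (1 + 2 t)`, and zero.
-/

noncomputable def a₁ : ℝ := 2.9 / (2.9 / 1.1) ^ (0.95 : ℝ)
noncomputable def a₂ : ℝ := 2.9 / (2.9 / 1.1) ^ (0.45 : ℝ)

noncomputable def r (x : ℝ) : ℝ :=
  if x < a₁ then (x - 1) / 2
  else if x ≤ a₂ then
    (x - 1) / 2 - (1 / Real.log (2.9 / 1.1)) *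
      Real.log (2.9 / (1 + 2 * Real.log (2.9 / x) / Real.log (2.9 / 1.1)))
  else (x - 1) / 2 - Real.log (2.9 / 1.9) / Real.log (2.9 / 1.1)

noncomputable def g (x : ℝ) : ℝ := 1 / (x * Real.log (2.9 / 1.1))

open Real Set intervalIntegral
open MeasureTheory (volume)

section LogCoordinate

variable {c L : ℝ}

theorem hasDerivAt_log_div_div (hc : c ≠ 0) {x : ℝ} (hx : x ≠ 0) :
    HasDerivAt (fun y => log (c / y) / L) (-(1 / (x * L))) x := by
  have h := (((hasDerivAt_const x c).div (hasDerivAt_id' x) hx).log (div_ne_zero hc hx)).div_const L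
  refine h.congr_deriv ?_
  simp only [Pi.div_apply]
  field_simp
  ring

theorem ne_zero_of_mem_uIcc {a b x : ℝ} (ha : 0 < a) (hb : 0 < b) (hx : x ∈ uIcc a b) : x ≠ 0 :=
  (lt_min ha hb |>.trans_le hx.1).ne'

theorem continuousOn_one_div_mul {a b : ℝ} (ha : 0 < a) (hb : 0 < b) :
    ContinuousOn (fun x => 1 / (x * L)) (uIcc a b) := by
  simp only [one_div, mul_inv]
  exact (continuousOn_inv₀.mono fun x hx => ne_zero_of_mem_uIcc ha hb hx).mul continuousOn_const

theorem integral_comp_log_div_div_mul {φ : ℝ → ℝ} (hφ : Continuous φ) (hc : c ≠ 0) {a b : ℝ}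
    (ha : 0 < a) (hb : 0 < b) :
    ∫ x in a..b, φ (log (c / x) / L) * (1 / (x * L)) =
      ∫ t in log (c / b) / L..log (c / a) / L, φ t := by
  calc ∫ x in a..b, φ (log (c / x) / L) * (1 / (x * L))
      = -∫ x in a..b, (φ ∘ fun y => log (c / y) / L) x * -(1 / (x * L)) := by
        simp only [Function.comp_apply, mul_neg, integral_neg, neg_neg]
    _ = ∫ t in log (c / b) / L..log (c / a) / L, φ t := by
        rw [integral_comp_mul_deriv
          (fun x hx => hasDerivAt_log_div_div hc (ne_zero_of_mem_uIcc ha hb hx))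
          (continuousOn_one_div_mul ha hb).neg hφ, integral_symm, neg_neg]

theorem integral_sub_one_div_two_mul {a b : ℝ} (ha : 0 < a) (hb : 0 < b) :
    ∫ x in a..b, (x - 1) / 2 * (1 / (x * L)) = (b - a - log (b / a)) / (2 * L) := by
  have h : ∀ x ∈ uIcc a b, (x - 1) / 2 * (1 / (x * L)) = (1 - x⁻¹) / (2 * L) := by
    intro x hx
    have := ne_zero_of_mem_uIcc ha hb hx
    field_simp
  rw [integral_congr h, integral_div, integral_sub intervalIntegrable_const
    (intervalIntegrable_inv (fun x hx => ne_zero_of_mem_uIcc ha hb hx) continuousOn_id),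
    integral_inv_of_pos ha hb, integral_const, smul_eq_mul, mul_one]

end LogCoordinate

theorem integral_log_one_add_two_mul (a b : ℝ) :
    ∫ t in a..b, log (1 + 2 * t) =
      ((1 + 2 * b) * log (1 + 2 * b) - (1 + 2 * a) * log (1 + 2 * a)) / 2 - (b - a) := by
  have h := integral_comp_mul_add (a := a) (b := b) log (two_ne_zero' ℝ) 1
  simp only [add_comm _ (1 : ℝ)] at h
  rw [h, integral_log, smul_eq_mul]
  ring

noncomputable def τ (x : ℝ) : ℝ := log (2.9 / x) / log (2.9 / 1.1)

noncomputable def ψ (t : ℝ) : ℝ := log (2.9 / (1 + 2 * max 0.45 (min t 0.95))) / log (2.9 / 1.1)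

theorem log_ratio_pos : 0 < log (2.9 / 1.1) := log_pos (by norm_num)

theorem a₁_pos : 0 < a₁ := by unfold a₁; positivity

theorem a₂_pos : 0 < a₂ := by unfold a₂; positivity

theorem τ_div_rpow (p : ℝ) : τ (2.9 / (2.9 / 1.1) ^ p) = p := by
  unfold τ
  rw [div_div_cancel₀ (by norm_num), log_rpow (by norm_num),
    mul_div_cancel_right₀ _ log_ratio_pos.ne']

theorem τ_one_point_one : τ 1.1 = 1 := div_self log_ratio_pos.ne'

theorem τ_one_point_nine_le : τ 1.9 ≤ 0.45 := by
  have h : log ((2.9 / 1.9) ^ 20) ≤ log ((2.9 / 1.1) ^ 9) :=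
    log_le_log (by positivity) (by norm_num)
  rw [log_pow, log_pow] at h
  rw [τ, div_le_iff₀ log_ratio_pos]
  push_cast at h
  linarith

theorem τ_strictAntiOn : StrictAntiOn τ (Ioi 0) := fun x hx y _ hxy =>
  div_lt_div_of_pos_right (log_lt_log (div_pos (by norm_num) (hx.trans hxy))
    (div_lt_div_of_pos_left (by norm_num) hx hxy)) log_ratio_pos

theorem ψ_continuous : Continuous ψ := by
  have h : ∀ t, 1 + 2 * max 0.45 (min t 0.95) ≠ (0 : ℝ) := fun t => by
    have := le_max_left (0.45 : ℝ) (min t 0.95)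
    positivity
  have hw : Continuous fun t : ℝ => 1 + 2 * max 0.45 (min t 0.95) := by fun_prop
  exact ((continuous_const.div hw h).log fun t => div_ne_zero (by norm_num) (h t)).div_const _

theorem ψ_of_le {t : ℝ} (ht : t ≤ 0.45) : ψ t = τ 1.9 := by
  rw [ψ, τ, min_eq_left (ht.trans (by norm_num)), max_eq_left ht]
  norm_num

theorem ψ_of_ge {t : ℝ} (ht : 0.95 ≤ t) : ψ t = 0 := by
  rw [ψ, min_eq_right ht]
  norm_num

theorem ψ_of_mem_Icc {t : ℝ} (ht : t ∈ Icc 0.45 0.95) :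
    ψ t = (log 2.9 - log (1 + 2 * t)) / log (2.9 / 1.1) := by
  have : 0 < 1 + 2 * t := by linarith [ht.1]
  rw [ψ, min_eq_left ht.2, max_eq_right ht.1, log_div (by norm_num) this.ne']

theorem r_eq_sub_ψ_τ {x : ℝ} (hx : 0 < x) : r x = (x - 1) / 2 - ψ (τ x) := by
  have hτ_a₁ : τ a₁ = 0.95 := τ_div_rpow 0.95
  have hτ_a₂ : τ a₂ = 0.45 := τ_div_rpow 0.45
  unfold r
  split_ifs with h₁ h₂
  · have := (τ_strictAntiOn.lt_iff_gt a₁_pos hx).mpr h₁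
    rw [ψ_of_ge (by linarith), sub_zero]
  · have hle := (τ_strictAntiOn.le_iff_ge hx a₁_pos).mpr (not_lt.mp h₁)
    have hge := (τ_strictAntiOn.le_iff_ge a₂_pos hx).mpr h₂
    rw [ψ, min_eq_left (by linarith), max_eq_right (by linarith), τ, one_div_mul_eq_div,
      mul_div_assoc]
  · have := (τ_strictAntiOn.lt_iff_gt hx a₂_pos).mpr (not_le.mp h₂)
    rw [ψ_of_le (by linarith), τ]

theorem integral_ψ :
    ∫ t in τ 1.9..1, ψ t = 1 / (2 * log (2.9 / 1.1)) - τ 1.9 * (τ 1.9 + 1 / 2) := by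
  have hint (a b : ℝ) : IntervalIntegrable ψ volume a b :=
    ψ_continuous.intervalIntegrable a b
  have hlow : ∫ t in τ 1.9..0.45, ψ t = (0.45 - τ 1.9) * τ 1.9 := by
    have hψ : EqOn ψ (fun _ => τ 1.9) (uIcc (τ 1.9) 0.45) := fun t ht =>
      ψ_of_le (by rw [uIcc_of_le τ_one_point_nine_le] at ht; exact ht.2)
    rw [integral_congr hψ, integral_const, smul_eq_mul]
  have hmid : ∫ t in (0.45 : ℝ)..0.95, ψ t =
      (1 / 2 - 0.95 * log (2.9 / 1.9)) / log (2.9 / 1.1) := by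
    have hIcc : uIcc (0.45 : ℝ) 0.95 = Icc 0.45 0.95 := uIcc_of_le (by norm_num)
    have hψ : EqOn ψ (fun t => (log 2.9 - log (1 + 2 * t)) / log (2.9 / 1.1)) (uIcc 0.45 0.95) :=
      fun t ht => ψ_of_mem_Icc (hIcc ▸ ht)
    have hlog : IntervalIntegrable (fun t : ℝ => log (1 + 2 * t)) volume 0.45 0.95 :=
      ContinuousOn.intervalIntegrable <| ContinuousOn.log (by fun_prop) fun t ht => by
        linarith [(hIcc ▸ ht : t ∈ Icc (0.45 : ℝ) 0.95).1]
    rw [integral_congr hψ, integral_div, integral_sub intervalIntegrable_const hlog,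
      integral_const, integral_log_one_add_two_mul, log_div (x := 2.9) (y := 1.9) (by norm_num)
      (by norm_num)]
    norm_num
    ring
  have hhigh : ∫ t in (0.95 : ℝ)..1, ψ t = 0 := by
    have hψ : EqOn ψ (fun _ => 0) (uIcc 0.95 1) :=
      fun t ht => ψ_of_ge (by rw [uIcc_of_le (by norm_num)] at ht; exact ht.1)
    rw [integral_congr hψ, integral_zero]
  rw [← integral_add_adjacent_intervals (hint _ 0.45) (hint 0.45 1),
    ← integral_add_adjacent_intervals (hint 0.45 0.95) (hint 0.95 1), hlow, hmid, hhigh, τ]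
  field_simp
  ring

theorem integral_r_mul_g_eq_sub :
    ∫ x in (1.1 : ℝ)..1.9, r x * g x =
      (∫ x in (1.1 : ℝ)..1.9, (x - 1) / 2 * g x) - ∫ x in (1.1 : ℝ)..1.9, ψ (τ x) * g x := by
  have hpos : ∀ x ∈ uIcc (1.1 : ℝ) 1.9, 0 < x := fun x hx => by
    rw [uIcc_of_le (by norm_num)] at hx; linarith [hx.1]
  have hg : ContinuousOn g (uIcc 1.1 1.9) := continuousOn_one_div_mul (by norm_num) (by norm_num)
  have hτ : ContinuousOn τ (uIcc 1.1 1.9) := fun x hx =>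
    (hasDerivAt_log_div_div (by norm_num) (hpos x hx).ne').continuousAt.continuousWithinAt
  have hsplit : EqOn (fun x => r x * g x) (fun x => (x - 1) / 2 * g x - ψ (τ x) * g x)
      (uIcc 1.1 1.9) := fun x hx => by
    simp only [r_eq_sub_ψ_τ (hpos x hx), sub_mul]
  rw [integral_congr hsplit]
  exact integral_sub (ContinuousOn.mul (by fun_prop) hg).intervalIntegrable
    ((ψ_continuous.comp_continuousOn hτ).mul hg).intervalIntegrable

theorem integral_ψ_comp_τ_mul_g : ∫ x in (1.1 : ℝ)..1.9, ψ (τ x) * g x = ∫ t in τ 1.9..1, ψ t := by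
  rw [← τ_one_point_one]
  exact integral_comp_log_div_div_mul ψ_continuous (by norm_num) (by norm_num) (by norm_num)

/-- Closed form of `∫_{1.1}^{1.9} r(x) g(x) dx`. -/
theorem statement9 :
    ∫ x in (1.1 : ℝ)..1.9, r x * g x =
      (Real.log (2.9 / 1.9) / Real.log (2.9 / 1.1) + 1 / 2) ^ 2 -
        0.1 / Real.log (2.9 / 1.1) - 3 / 4 := by
  have hlin : ∫ x in (1.1 : ℝ)..1.9, (x - 1) / 2 * g x =
      (1.9 - 1.1 - log (1.9 / 1.1)) / (2 * log (2.9 / 1.1)) :=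
    integral_sub_one_div_two_mul (by norm_num) (by norm_num)
  have hlog : log (1.9 / 1.1) = log (2.9 / 1.1) - log (2.9 / 1.9) := by
    rw [log_div (by norm_num) (by norm_num), log_div (x := 2.9) (by norm_num) (by norm_num),
      log_div (x := 2.9) (by norm_num) (by norm_num)]
    ring
  have hL := log_ratio_pos.ne'
  rw [integral_r_mul_g_eq_sub, hlin, integral_ψ_comp_τ_mul_g, integral_ψ, τ, hlog]
  field_simp
  ring
end

section
/- For all real numbers b and ℓ with b ≥ 1.1 − 6·10^{-6} and ℓ ≥ 0, one has (1/ln(2.9/1.1))·ln((b + ℓ)/b) ≤ 0.94·ℓ. -/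
/-!
Since `ln x ≤ x - 1`, the left side is at most `ℓ / (b · ln(29/11))`, and the same inequality
applied to `11e/29` together with `e < 2.7182818286` gives `ln(29/11) > 0.9689`; then
`b · ln(29/11) > 1.0658 > 1/0.94`.
-/

open Real

lemma Real.log_add_div_self_le {b ℓ : ℝ} (hb : 0 < b) (hbℓ : 0 < b + ℓ) :
    log ((b + ℓ) / b) ≤ ℓ / b := by
  calc log ((b + ℓ) / b) ≤ (b + ℓ) / b - 1 := log_le_sub_one_of_pos (div_pos hbℓ hb)
    _ = ℓ / b := by field_simp; ring

lemma Real.log_twentynine_div_eleven_gt : 0.9689 < log (29 / 11) := by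
  have h_split : log (29 / 11) = 1 - log (11 * exp 1 / 29) := by
    rw [log_div (by norm_num) (by norm_num), log_div (by positivity) (by norm_num),
      log_mul (by norm_num) (exp_pos 1).ne', log_exp]
    ring
  have h_small : log (11 * exp 1 / 29) < 0.0311 :=
    calc log (11 * exp 1 / 29) ≤ 11 * exp 1 / 29 - 1 := log_le_sub_one_of_pos (by positivity)
      _ < 0.0311 := by linarith [exp_one_lt_d9]
  linarith

/-- For `b ≥ 1.1 − 6·10⁻⁶` and `ℓ ≥ 0`,
`(1/ln(2.9/1.1))·ln((b+ℓ)/b) ≤ 0.94 ℓ`. -/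
theorem statement17 (b ℓ : ℝ) (hb : b ≥ 1.1 - 6e-6) (hℓ : ℓ ≥ 0) :
    (1 / Real.log (2.9 / 1.1)) * Real.log ((b + ℓ) / b) ≤ 0.94 * ℓ := by
  have hb' : (1.099994 : ℝ) ≤ b := by norm_num at hb ⊢; exact hb
  have hL : 0.9689 < log (2.9 / 1.1) := by
    rw [show (2.9 : ℝ) / 1.1 = 29 / 11 by norm_num]
    exact log_twentynine_div_eleven_gt
  have hLb : 1 / 0.94 ≤ log (2.9 / 1.1) * b := by nlinarith
  calc (1 / log (2.9 / 1.1)) * log ((b + ℓ) / b)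
      ≤ (1 / log (2.9 / 1.1)) * (ℓ / b) := by
        gcongr
        exact log_add_div_self_le (by linarith) (by linarith)
    _ = ℓ / (log (2.9 / 1.1) * b) := by field_simp
    _ ≤ 0.94 * ℓ := by
        rw [div_le_iff₀ (by nlinarith)]
        nlinarith
end
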